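/- arXiv:2003.13199 — 3 statements merged into one kernel-verified Lean document; each statement's English description precedes it below -/
import Mathlib

section
/- Let (X, F, μ) be a measure space, n ≥ 1, and let t : X → ℝ^n and k : X → ℝ be measurable. For θ ∈ ℝ^n set Z(θ) := ∫ exp(⟨θ, t(x)⟩ + k(x)) dμ(x), F(θ) := log Z(θ), p_θ(x) := exp(⟨θ, t(x)⟩ - F(θ) + k(x)). If θ ∈ ℝ^n satisfies 0 < Z(θ) < ∞ and 0 < Z(2θ) < ∞, then Onicescu's informational energy of p_θ satisfies I(p_θ) = ∫ p_θ(x)² dμ(x) = exp(F(2θ) - 2F(θ)) · ∫ p_{2θ}(x) · exp(k(x)) dμ(x). -/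
open MeasureTheory
open scoped ENNReal

/-- Partition function of an exponential family with sufficient statistic `t` and
carrier term `k`. -/
noncomputable def expFamZ {X : Type*} [MeasurableSpace X] (μ : Measure X) {n : ℕ}
    (t : X → Fin n → ℝ) (k : X → ℝ) (θ : Fin n → ℝ) : ℝ≥0∞ :=
  ∫⁻ x, ENNReal.ofReal (Real.exp ((∑ i, θ i * t x i) + k x)) ∂μ

/-- Cumulant function (log-normalizer) of the exponential family. -/
noncomputable def expFamF {X : Type*} [MeasurableSpace X] (μ : Measure X) {n : ℕ}
    (t : X → Fin n → ℝ) (k : X → ℝ) (θ : Fin n → ℝ) : ℝ :=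
  Real.log (expFamZ μ t k θ).toReal

/-- Density of the exponential family. -/
noncomputable def expFamPdf {X : Type*} [MeasurableSpace X] (μ : Measure X) {n : ℕ}
    (t : X → Fin n → ℝ) (k : X → ℝ) (θ : Fin n → ℝ) (x : X) : ℝ :=
  Real.exp ((∑ i, θ i * t x i) - expFamF μ t k θ + k x)

/-- Closed form for Onicescu's informational energy of a density of an exponential
family. -/
theorem informationalEnergy_expFam {X : Type*} [MeasurableSpace X] (μ : Measure X)
    {n : ℕ} (hn : 1 ≤ n) (t : X → Fin n → ℝ) (k : X → ℝ)
    (ht : Measurable t) (hk : Measurable k) (θ : Fin n → ℝ)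
    (hZ : 0 < expFamZ μ t k θ) (hZ' : expFamZ μ t k θ < ⊤)
    (hZ2 : 0 < expFamZ μ t k ((2 : ℝ) • θ)) (hZ2' : expFamZ μ t k ((2 : ℝ) • θ) < ⊤) :
    ∫ x, (expFamPdf μ t k θ x) ^ 2 ∂μ
      = Real.exp (expFamF μ t k ((2 : ℝ) • θ) - 2 * expFamF μ t k θ) *
          ∫ x, expFamPdf μ t k ((2 : ℝ) • θ) x * Real.exp (k x) ∂μ := by
  rw [← MeasureTheory.integral_const_mul]
  refine integral_congr_ae (Filter.Eventually.of_forall fun x => ?_)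
  have hsum : (∑ i, ((2 : ℝ) • θ) i * t x i) = 2 * ∑ i, θ i * t x i := by
    rw [Finset.mul_sum]
    refine Finset.sum_congr rfl fun i _ => ?_
    simp [Pi.smul_apply]; ring
  simp only [expFamPdf, sq, ← Real.exp_add, hsum]
  ring_nf
end

section
/- Let (X, F, μ) be a measure space, n ≥ 1, and let t : X → ℝ^n and k : X → ℝ be measurable. For θ ∈ ℝ^n set Z(θ) := ∫ exp(⟨θ, t(x)⟩ + k(x)) dμ(x), F(θ) := log Z(θ), p_θ(x) := exp(⟨θ, t(x)⟩ - F(θ) + k(x)), and E_θ := ∫ p_θ(x)·exp(k(x)) dμ(x). Suppose θ₁, θ₂ ∈ ℝ^n are such that Z(θ₁), Z(θ₂), Z(2θ₁), Z(2θ₂), Z(θ₁+θ₂) all lie in (0,∞), and that E_{2θ₁} > 0, E_{2θ₂} > 0, E_{θ₁+θ₂} > 0. Then Onicescu's correlation coefficient satisfies ρ(p_{θ₁}, p_{θ₂}) = exp(-J_F(2θ₁, 2θ₂)) · E_{θ₁+θ₂} / √(E_{2θ₁} · E_{2θ₂}), where J_F(θ, θ') := (F(θ)+F(θ'))/2 -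 F((θ+θ')/2). -/
open MeasureTheory
open scoped ENNReal

/-- Expectation of `exp (k x)` under the exponential family density `p_θ`. -/
noncomputable def expFamE {X : Type*} [MeasurableSpace X] (μ : Measure X) {n : ℕ}
    (t : X → Fin n → ℝ) (k : X → ℝ) (θ : Fin n → ℝ) : ℝ :=
  ∫ x, expFamPdf μ t k θ x * Real.exp (k x) ∂μ

/-- Jensen divergence of the cumulant function. -/
noncomputable def jensenF {X : Type*} [MeasurableSpace X] (μ : Measure X) {n : ℕ}
    (t : X → Fin n → ℝ) (k : X → ℝ) (θ θ' : Fin n → ℝ) : ℝ :=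
  (expFamF μ t k θ + expFamF μ t k θ') / 2 - expFamF μ t k (((1 : ℝ) / 2) • (θ + θ'))


lemma expFamPdf_mul {X : Type*} [MeasurableSpace X] (μ : Measure X) {n : ℕ}
    (t : X → Fin n → ℝ) (k : X → ℝ) (θ θ' : Fin n → ℝ) (x : X) :
    expFamPdf μ t k θ x * expFamPdf μ t k θ' x
      = Real.exp (expFamF μ t k (θ + θ') - expFamF μ t k θ - expFamF μ t k θ') *
        (expFamPdf μ t k (θ + θ') x * Real.exp (k x)) := by
  unfold expFamPdf
  rw [← Real.exp_add, ← Real.exp_add, ← Real.exp_add]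
  congr 1
  have h : ∑ i, (θ + θ') i * t x i
      = (∑ i, θ i * t x i) + ∑ i, θ' i * t x i := by
    simp [add_mul, Finset.sum_add_distrib]
  rw [h]; ring

lemma expFamPdf_integral_mul {X : Type*} [MeasurableSpace X] (μ : Measure X) {n : ℕ}
    (t : X → Fin n → ℝ) (k : X → ℝ) (θ θ' : Fin n → ℝ) :
    (∫ x, expFamPdf μ t k θ x * expFamPdf μ t k θ' x ∂μ)
      = Real.exp (expFamF μ t k (θ + θ') - expFamF μ t k θ - expFamF μ t k θ') *
        expFamE μ t k (θ + θ') := by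
  simp_rw [expFamPdf_mul μ t k θ θ']
  rw [MeasureTheory.integral_const_mul]
  rfl

lemma real_sqrt_exp (y : ℝ) : Real.sqrt (Real.exp y) = Real.exp (y / 2) := by
  rw [show Real.exp y = (Real.exp (y / 2)) ^ 2 by
    rw [sq, ← Real.exp_add]; ring_nf]
  exact Real.sqrt_sq (Real.exp_nonneg _)

/-- Closed form for Onicescu's correlation coefficient between two densities of an
exponential family. -/
theorem onicescuCorrelation_expFam {X : Type*} [MeasurableSpace X] (μ : Measure X)
    {n : ℕ} (hn : 1 ≤ n) (t : X → Fin n → ℝ) (k : X → ℝ)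
    (ht : Measurable t) (hk : Measurable k) (θ₁ θ₂ : Fin n → ℝ)
    (hZ1 : 0 < expFamZ μ t k θ₁) (hZ1' : expFamZ μ t k θ₁ < ⊤)
    (hZ2 : 0 < expFamZ μ t k θ₂) (hZ2' : expFamZ μ t k θ₂ < ⊤)
    (hZ11 : 0 < expFamZ μ t k ((2 : ℝ) • θ₁)) (hZ11' : expFamZ μ t k ((2 : ℝ) • θ₁) < ⊤)
    (hZ22 : 0 < expFamZ μ t k ((2 : ℝ) • θ₂)) (hZ22' : expFamZ μ t k ((2 : ℝ) • θ₂) < ⊤)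
    (hZ12 : 0 < expFamZ μ t k (θ₁ + θ₂)) (hZ12' : expFamZ μ t k (θ₁ + θ₂) < ⊤)
    (hE1 : 0 < expFamE μ t k ((2 : ℝ) • θ₁)) (hE2 : 0 < expFamE μ t k ((2 : ℝ) • θ₂))
    (hE12 : 0 < expFamE μ t k (θ₁ + θ₂)) :
    (∫ x, expFamPdf μ t k θ₁ x * expFamPdf μ t k θ₂ x ∂μ) /
        Real.sqrt ((∫ x, (expFamPdf μ t k θ₁ x) ^ 2 ∂μ) *
          (∫ x, (expFamPdf μ t k θ₂ x) ^ 2 ∂μ))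
      = Real.exp (-(jensenF μ t k ((2 : ℝ) • θ₁) ((2 : ℝ) • θ₂))) *
          expFamE μ t k (θ₁ + θ₂) /
            Real.sqrt (expFamE μ t k ((2 : ℝ) • θ₁) * expFamE μ t k ((2 : ℝ) • θ₂)) := by
  have h11 : θ₁ + θ₁ = (2 : ℝ) • θ₁ := by funext i; simp [two_smul]; ring
  have h22 : θ₂ + θ₂ = (2 : ℝ) • θ₂ := by funext i; simp [two_smul]; ring
  have hhalf : ((1 : ℝ) / 2) • ((2 : ℝ) • θ₁ + (2 : ℝ) • θ₂) = θ₁ + θ₂ := by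
    funext i; simp [Pi.smul_apply, Pi.add_apply]; ring
  set F1 := expFamF μ t k θ₁
  set F2 := expFamF μ t k θ₂
  set F11 := expFamF μ t k ((2 : ℝ) • θ₁)
  set F22 := expFamF μ t k ((2 : ℝ) • θ₂)
  set F12 := expFamF μ t k (θ₁ + θ₂)
  set E1 := expFamE μ t k ((2 : ℝ) • θ₁)
  set E2 := expFamE μ t k ((2 : ℝ) • θ₂)
  set E12 := expFamE μ t k (θ₁ + θ₂)
  have hI12 : (∫ x, expFamPdf μ t k θ₁ x * expFamPdf μ t k θ₂ x ∂μ)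
      = Real.exp (F12 - F1 - F2) * E12 := expFamPdf_integral_mul μ t k θ₁ θ₂
  have hI1 : (∫ x, (expFamPdf μ t k θ₁ x) ^ 2 ∂μ)
      = Real.exp (F11 - F1 - F1) * E1 := by
    simp_rw [sq]
    have := expFamPdf_integral_mul μ t k θ₁ θ₁
    rwa [h11] at this
  have hI2 : (∫ x, (expFamPdf μ t k θ₂ x) ^ 2 ∂μ)
      = Real.exp (F22 - F2 - F2) * E2 := by
    simp_rw [sq]
    have := expFamPdf_integral_mul μ t k θ₂ θ₂
    rwa [h22] at this
  have hJ : -(jensenF μ t k ((2 : ℝ) • θ₁) ((2 : ℝ) • θ₂)) = F12 - (F11 + F22) / 2 := by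
    unfold jensenF
    rw [hhalf]; ring
  rw [hI12, hI1, hI2, hJ]
  have hprod : (Real.exp (F11 - F1 - F1) * E1) * (Real.exp (F22 - F2 - F2) * E2)
      = Real.exp ((F11 - F1 - F1) + (F22 - F2 - F2)) * (E1 * E2) := by
    rw [Real.exp_add]; ring
  rw [hprod, Real.sqrt_mul (Real.exp_nonneg _), real_sqrt_exp]
  have hE : (0:ℝ) < Real.sqrt (E1 * E2) :=
    Real.sqrt_pos.mpr (mul_pos hE1 hE2)
  rw [div_eq_div_iff (by positivity) (by positivity)]
  have hexp : Real.exp (F12 - F1 - F2)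
      = Real.exp (F12 - (F11 + F22) / 2) *
        Real.exp ((F11 - F1 - F1 + (F22 - F2 - F2)) / 2) := by
    rw [← Real.exp_add]; congr 1; ring
  rw [hexp]; ring
end

section
/- Let (X, F, μ) be a measure space, n ≥ 1, and let t : X → ℝ^n be measurable (carrier term k ≡ 0). For θ ∈ ℝ^n set Z(θ) := ∫ exp(⟨θ, t(x)⟩) dμ(x), F(θ) := log Z(θ), p_θ(x) := exp(⟨θ, t(x)⟩ - F(θ)). If θ₁, θ₂ ∈ ℝ^n satisfy that Z(θ₁), Z(θ₂), Z(2θ₁), Z(2θ₂), Z(θ₁+θ₂) all lie in (0,∞), then for every point ω ∈ X Onicescu's correlation coefficient satisfies ρ(p_{θ₁}, p_{θ₂}) = √(p_{2θ₁}(ω)) · √(p_{2θ₂}(ω)) / p_{θ₁+θ₂}(ω); in particular the right-hand side does not depend on the choice of ω. -/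
open MeasureTheory
open scoped ENNReal

/-- Partition function of an exponential family with sufficient statistic `t` and no
carrier term. -/
noncomputable def expFamZ₀ {X : Type*} [MeasurableSpace X] (μ : Measure X) {n : ℕ}
    (t : X → Fin n → ℝ) (θ : Fin n → ℝ) : ℝ≥0∞ :=
  ∫⁻ x, ENNReal.ofReal (Real.exp (∑ i, θ i * t x i)) ∂μ

/-- Cumulant function (log-normalizer) of the exponential family with no carrier
term. -/
noncomputable def expFamF₀ {X : Type*} [MeasurableSpace X] (μ : Measure X) {n : ℕ}
    (t : X → Fin n → ℝ) (θ : Fin n → ℝ) : ℝ :=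
  Real.log (expFamZ₀ μ t θ).toReal

/-- Density of the exponential family with no carrier term. -/
noncomputable def expFamPdf₀ {X : Type*} [MeasurableSpace X] (μ : Measure X) {n : ℕ}
    (t : X → Fin n → ℝ) (θ : Fin n → ℝ) (x : X) : ℝ :=
  Real.exp ((∑ i, θ i * t x i) - expFamF₀ μ t θ)

/-- Jensen divergence of the cumulant function. -/
noncomputable def jensenF₀ {X : Type*} [MeasurableSpace X] (μ : Measure X) {n : ℕ}
    (t : X → Fin n → ℝ) (θ θ' : Fin n → ℝ) : ℝ :=
  (expFamF₀ μ t θ + expFamF₀ μ t θ') / 2 - expFamF₀ μ t (((1 : ℝ) / 2) • (θ + θ'))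



private lemma expFam_integral_exp_sub {X : Type*} [MeasurableSpace X] (μ : Measure X)
    {n : ℕ} (t : X → Fin n → ℝ) (ht : Measurable t) (θ : Fin n → ℝ) (c : ℝ) :
    ∫ x, Real.exp ((∑ i, θ i * t x i) - c) ∂μ
      = (expFamZ₀ μ t θ).toReal * Real.exp (-c) := by
  have hm : Measurable fun x => Real.exp (∑ i, θ i * t x i) := by
    apply Real.measurable_exp.comp
    exact Finset.measurable_sum _ fun i _ =>
      (measurable_const.mul ((measurable_pi_apply i).comp ht))
  have h1 : ∫ x, Real.exp ((∑ i, θ i * t x i) - c) ∂μ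
      = (∫⁻ x, ENNReal.ofReal (Real.exp ((∑ i, θ i * t x i) - c)) ∂μ).toReal := by
    rw [MeasureTheory.integral_eq_lintegral_of_nonneg_ae]
    · filter_upwards with x using (Real.exp_pos _).le
    · exact (Real.measurable_exp.comp ((Finset.measurable_sum _ fun i _ =>
        (measurable_const.mul ((measurable_pi_apply i).comp ht))).sub
        measurable_const)).aestronglyMeasurable
  rw [h1]
  have h2 : ∀ x : X, ENNReal.ofReal (Real.exp ((∑ i, θ i * t x i) - c))
      = ENNReal.ofReal (Real.exp (∑ i, θ i * t x i)) * ENNReal.ofReal (Real.exp (-c)) := by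
    intro x
    rw [← ENNReal.ofReal_mul (Real.exp_pos _).le, ← Real.exp_add]
    ring_nf
  simp_rw [h2]
  rw [MeasureTheory.lintegral_mul_const _ hm.ennreal_ofReal,
    ENNReal.toReal_mul, ENNReal.toReal_ofReal (Real.exp_pos _).le]
  rfl

/-- With no carrier term, Onicescu's correlation coefficient equals
`√(p_{2θ₁}(ω)) √(p_{2θ₂}(ω)) / p_{θ₁+θ₂}(ω)` for every point `ω`; in particular the
right-hand side does not depend on the choice of `ω`. -/
theorem onicescuCorrelation_expFam_noCarrier_pointwise {X : Type*}
    [MeasurableSpace X] (μ : Measure X) {n : ℕ} (hn : 1 ≤ n)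
    (t : X → Fin n → ℝ) (ht : Measurable t) (θ₁ θ₂ : Fin n → ℝ)
    (hZ1 : 0 < expFamZ₀ μ t θ₁) (hZ1' : expFamZ₀ μ t θ₁ < ⊤)
    (hZ2 : 0 < expFamZ₀ μ t θ₂) (hZ2' : expFamZ₀ μ t θ₂ < ⊤)
    (hZ11 : 0 < expFamZ₀ μ t ((2 : ℝ) • θ₁)) (hZ11' : expFamZ₀ μ t ((2 : ℝ) • θ₁) < ⊤)
    (hZ22 : 0 < expFamZ₀ μ t ((2 : ℝ) • θ₂)) (hZ22' : expFamZ₀ μ t ((2 : ℝ) • θ₂) < ⊤)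
    (hZ12 : 0 < expFamZ₀ μ t (θ₁ + θ₂)) (hZ12' : expFamZ₀ μ t (θ₁ + θ₂) < ⊤) :
    ∀ ω : X, (∫ x, expFamPdf₀ μ t θ₁ x * expFamPdf₀ μ t θ₂ x ∂μ) /
        Real.sqrt ((∫ x, (expFamPdf₀ μ t θ₁ x) ^ 2 ∂μ) *
          (∫ x, (expFamPdf₀ μ t θ₂ x) ^ 2 ∂μ))
      = Real.sqrt (expFamPdf₀ μ t ((2 : ℝ) • θ₁) ω) *
          Real.sqrt (expFamPdf₀ μ t ((2 : ℝ) • θ₂) ω) /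
            expFamPdf₀ μ t (θ₁ + θ₂) ω := by
  intro ω
  set F1 := expFamF₀ μ t θ₁ with hF1
  set F2 := expFamF₀ μ t θ₂ with hF2
  set F11 := expFamF₀ μ t ((2 : ℝ) • θ₁) with hF11
  set F22 := expFamF₀ μ t ((2 : ℝ) • θ₂) with hF22
  set F12 := expFamF₀ μ t (θ₁ + θ₂) with hF12
  have hZ11pos : 0 < (expFamZ₀ μ t ((2 : ℝ) • θ₁)).toReal :=
    ENNReal.toReal_pos hZ11.ne' hZ11'.ne
  have hZ22pos : 0 < (expFamZ₀ μ t ((2 : ℝ) • θ₂)).toReal :=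
    ENNReal.toReal_pos hZ22.ne' hZ22'.ne
  have hZ12pos : 0 < (expFamZ₀ μ t (θ₁ + θ₂)).toReal :=
    ENNReal.toReal_pos hZ12.ne' hZ12'.ne
  have e11 : (expFamZ₀ μ t ((2 : ℝ) • θ₁)).toReal = Real.exp F11 := by
    rw [hF11]; unfold expFamF₀; rw [Real.exp_log hZ11pos]
  have e22 : (expFamZ₀ μ t ((2 : ℝ) • θ₂)).toReal = Real.exp F22 := by
    rw [hF22]; unfold expFamF₀; rw [Real.exp_log hZ22pos]
  have e12 : (expFamZ₀ μ t (θ₁ + θ₂)).toReal = Real.exp F12 := by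
    rw [hF12]; unfold expFamF₀; rw [Real.exp_log hZ12pos]
  have hI12 : (∫ x, expFamPdf₀ μ t θ₁ x * expFamPdf₀ μ t θ₂ x ∂μ)
      = Real.exp F12 * Real.exp (-(F1 + F2)) := by
    have : ∀ x, expFamPdf₀ μ t θ₁ x * expFamPdf₀ μ t θ₂ x
        = Real.exp ((∑ i, (θ₁ + θ₂) i * t x i) - (F1 + F2)) := by
      intro x
      unfold expFamPdf₀
      rw [← Real.exp_add]
      congr 1
      simp [add_mul, Finset.sum_add_distrib]
      ring
    simp_rw [this]
    rw [expFam_integral_exp_sub μ t ht, e12]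
  have hI11 : (∫ x, (expFamPdf₀ μ t θ₁ x) ^ 2 ∂μ)
      = Real.exp F11 * Real.exp (-(2 * F1)) := by
    have : ∀ x, (expFamPdf₀ μ t θ₁ x) ^ 2
        = Real.exp ((∑ i, ((2 : ℝ) • θ₁) i * t x i) - 2 * F1) := by
      intro x
      unfold expFamPdf₀
      rw [sq, ← Real.exp_add]
      congr 1
      simp [mul_assoc, ← Finset.mul_sum]
      ring
    simp_rw [this]
    rw [expFam_integral_exp_sub μ t ht, e11]
  have hI22 : (∫ x, (expFamPdf₀ μ t θ₂ x) ^ 2 ∂μ)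
      = Real.exp F22 * Real.exp (-(2 * F2)) := by
    have : ∀ x, (expFamPdf₀ μ t θ₂ x) ^ 2
        = Real.exp ((∑ i, ((2 : ℝ) • θ₂) i * t x i) - 2 * F2) := by
      intro x
      unfold expFamPdf₀
      rw [sq, ← Real.exp_add]
      congr 1
      simp [mul_assoc, ← Finset.mul_sum]
      ring
    simp_rw [this]
    rw [expFam_integral_exp_sub μ t ht, e22]
  rw [hI12, hI11, hI22]
  unfold expFamPdf₀
  have hs1 : (∑ i, ((2 : ℝ) • θ₁) i * t ω i) = 2 * ∑ i, θ₁ i * t ω i := by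
    simp [mul_assoc, ← Finset.mul_sum]
  have hs2 : (∑ i, ((2 : ℝ) • θ₂) i * t ω i) = 2 * ∑ i, θ₂ i * t ω i := by
    simp [mul_assoc, ← Finset.mul_sum]
  have hs12 : (∑ i, (θ₁ + θ₂) i * t ω i)
      = (∑ i, θ₁ i * t ω i) + ∑ i, θ₂ i * t ω i := by
    simp [add_mul, Finset.sum_add_distrib]
  rw [hs1, hs2, hs12, ← hF11, ← hF22, ← hF12]
  simp only [← Real.exp_add]
  rw [← Real.exp_half, ← Real.exp_sub, ← Real.exp_half, ← Real.exp_half,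
    ← Real.exp_add, ← Real.exp_sub]
  congr 1
  ring
end
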